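/- Let Ω, D ⊂ ℝ² be domains and f : (Ω, ρ_Ω) → (D, ρ_D) an η-quasisymmetric homeomorphism, where ρ_Ω, ρ_D are the inner diameter metrics. If γ is an (A, ρ_Ω)-uniform curve in Ω for some A ≥ 1, then f ∘ γ is an (A', ρ_D)-uniform curve in D with A' = 2η(2A). -/

import Mathlib

open Set Metric Filter Topology
open scoped ENNReal

noncomputable section

/-- `S` is a connected component of the complement of `Ω`. -/
def IsComplComponent (Ω S : Set ℂ) : Prop := ∃ z ∈ Ωᶜ, S = connectedComponentIn Ωᶜ z

/-- The inner length metric `λ_Ω`: infimum of lengths of curves in `Ω` joining the points. -/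
def innerLen (Ω : Set ℂ) (a b : ℂ) : ℝ≥0∞ :=
  ⨅ γ : {γ : ℝ → ℂ // ContinuousOn γ (Set.Icc 0 1) ∧ Set.MapsTo γ (Set.Icc 0 1) Ω ∧
      γ 0 = a ∧ γ 1 = b}, eVariationOn γ.1 (Set.Icc 0 1)

/-- The inner diameter metric `ρ_Ω`: infimum of diameters of curves in `Ω` joining the points. -/
def innerDiam (Ω : Set ℂ) (a b : ℂ) : ℝ≥0∞ :=
  ⨅ γ : {γ : ℝ → ℂ // ContinuousOn γ (Set.Icc 0 1) ∧ Set.MapsTo γ (Set.Icc 0 1) Ω ∧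
      γ 0 = a ∧ γ 1 = b}, EMetric.diam (γ.1 '' Set.Icc 0 1)

/-- An inner `A`-uniform curve (length version) in `Ω`. -/
def IsInnerUniformCurve (A : ℝ) (Ω : Set ℂ) (γ : ℝ → ℂ) : Prop :=
  ContinuousOn γ (Set.Icc 0 1) ∧ Set.MapsTo γ (Set.Icc 0 1) Ω ∧
  eVariationOn γ (Set.Icc 0 1) ≤ ENNReal.ofReal A * innerLen Ω (γ 0) (γ 1) ∧
  ∀ t ∈ Set.Icc (0:ℝ) 1,
    min (eVariationOn γ (Set.Icc 0 t)) (eVariationOn γ (Set.Icc t 1))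
      ≤ ENNReal.ofReal (A * Metric.infDist (γ t) (frontier Ω))

/-- An inner `A`-uniform domain in the plane. -/
def IsInnerUniformDomain (A : ℝ) (Ω : Set ℂ) : Prop :=
  IsOpen Ω ∧ IsConnected Ω ∧
  ∀ a ∈ Ω, ∀ b ∈ Ω, ∃ γ : ℝ → ℂ, IsInnerUniformCurve A Ω γ ∧ γ 0 = a ∧ γ 1 = b

/-- An `A`-uniform curve in `Ω`. -/
def IsUniformCurve (A : ℝ) (Ω : Set ℂ) (γ : ℝ → ℂ) : Prop :=
  ContinuousOn γ (Set.Icc 0 1) ∧ Set.MapsTo γ (Set.Icc 0 1) Ω ∧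
  eVariationOn γ (Set.Icc 0 1) ≤ ENNReal.ofReal (A * dist (γ 0) (γ 1)) ∧
  ∀ t ∈ Set.Icc (0:ℝ) 1,
    min (eVariationOn γ (Set.Icc 0 t)) (eVariationOn γ (Set.Icc t 1))
      ≤ ENNReal.ofReal (A * Metric.infDist (γ t) (frontier Ω))

/-- An `A`-uniform domain in the plane. -/
def IsUniformDomain (A : ℝ) (Ω : Set ℂ) : Prop :=
  IsOpen Ω ∧ IsConnected Ω ∧
  ∀ a ∈ Ω, ∀ b ∈ Ω, ∃ γ : ℝ → ℂ, IsUniformCurve A Ω γ ∧ γ 0 = a ∧ γ 1 = b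
/-- An `(A, ρ_Ω)`-uniform curve (diameter version) in `Ω`. -/
def IsInnerDiamUniformCurve (A : ℝ) (Ω : Set ℂ) (γ : ℝ → ℂ) : Prop :=
  ContinuousOn γ (Set.Icc 0 1) ∧ Set.MapsTo γ (Set.Icc 0 1) Ω ∧
  EMetric.diam (γ '' Set.Icc 0 1) ≤ ENNReal.ofReal A * innerDiam Ω (γ 0) (γ 1) ∧
  ∀ t ∈ Set.Icc (0:ℝ) 1,
    min (EMetric.diam (γ '' Set.Icc 0 t)) (EMetric.diam (γ '' Set.Icc t 1))
      ≤ ENNReal.ofReal (A * Metric.infDist (γ t) (frontier Ω))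

/-!
Fix a point `x = γ t` at distance `d` from `∂Ω`. Pulling back points of `D` that approach the
boundary point nearest to `f x`, and using that `f` is continuous (as `η τ → 0` when `τ → 0`)
while `closedBall x (d/2)` is a compact subset of `Ω`, one finds `w ∈ Ω` with
`ρ_Ω(x, w) ≥ d/2` and `ρ_D(f x, f w) ≤ dist(f x, ∂D)`. On a subarc through `x` of diameter at
most `A d` every point `y` has `ρ_Ω(x, y) ≤ 2A · ρ_Ω(x, w)`, so quasisymmetry gives
`ρ_D(f x, f y) ≤ η(2A) · dist(f x, ∂D)`, and the image subarc lies in a ball of that radius.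
The diameter bound is the same argument with `x = γ 0` and `w = γ 1`.
-/

def IsInnerDiamQuasisymmetric (η : ℝ → ℝ) (Ω D : Set ℂ) (f : ℂ → ℂ) : Prop :=
  ∀ x₁ ∈ Ω, ∀ x₂ ∈ Ω, ∀ x₃ ∈ Ω, ∀ t : ℝ, 0 ≤ t →
    innerDiam Ω x₁ x₂ ≤ ENNReal.ofReal t * innerDiam Ω x₁ x₃ →
    innerDiam D (f x₁) (f x₂) ≤ ENNReal.ofReal (η t) * innerDiam D (f x₁) (f x₃)

section innerDiam

variable {Ω : Set ℂ}

lemma edist_le_innerDiam (a b : ℂ) : edist a b ≤ innerDiam Ω a b :=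
  le_iInf fun ⟨γ, _, _, h0, h1⟩ => by
    subst h0 h1
    exact edist_le_ediam_of_mem (mem_image_of_mem γ (left_mem_Icc.2 zero_le_one))
      (mem_image_of_mem γ (right_mem_Icc.2 zero_le_one))

lemma innerDiam_le_ediam_image {E : Type*} [NormedAddCommGroup E] [NormedSpace ℝ E]
    {I : Set E} (hI : Convex ℝ I) {γ : E → ℂ} (hc : ContinuousOn γ I) (hm : MapsTo γ I Ω)
    {u s : E} (hu : u ∈ I) (hs : s ∈ I) :
    innerDiam Ω (γ u) (γ s) ≤ ediam (γ '' I) := by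
  have hseg : MapsTo (AffineMap.lineMap u s) (Icc (0 : ℝ) 1) I := fun v hv =>
    hI.segment_subset hu hs (segment_eq_image_lineMap ℝ u s ▸ mem_image_of_mem _ hv)
  calc innerDiam Ω (γ u) (γ s)
      ≤ ediam ((γ ∘ AffineMap.lineMap u s) '' Icc 0 1) :=
        iInf_le_of_le ⟨γ ∘ AffineMap.lineMap u s,
          hc.comp AffineMap.lineMap_continuous.continuousOn hseg, hm.comp hseg,
          by simp, by simp⟩ le_rfl
    _ ≤ ediam (γ '' I) := ediam_mono (image_comp γ _ _ ▸ image_mono hseg.image_subset)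

lemma innerDiam_self {a : ℂ} (ha : a ∈ Ω) : innerDiam Ω a a = 0 :=
  le_antisymm ((innerDiam_le_ediam_image (convex_singleton a) continuousOn_id
    (mapsTo_singleton.2 ha) rfl rfl).trans_eq (by simp)) zero_le

lemma innerDiam_le_edist_of_segment_subset {a b : ℂ} (h : segment ℝ a b ⊆ Ω) :
    innerDiam Ω a b ≤ edist a b := by
  have := innerDiam_le_ediam_image (convex_segment a b) continuousOn_id h
    (left_mem_segment ℝ a b) (right_mem_segment ℝ a b)
  rwa [image_id, ← convexHull_pair, convexHull_ediam, ediam_pair] at this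

lemma innerDiam_le_edist_of_mem_ball {c a b : ℂ} {r : ℝ} (hball : ball c r ⊆ Ω)
    (ha : a ∈ ball c r) (hb : b ∈ ball c r) : innerDiam Ω a b ≤ edist a b :=
  innerDiam_le_edist_of_segment_subset (((convex_ball c r).segment_subset ha hb).trans hball)

lemma innerDiam_univ (a b : ℂ) : innerDiam univ a b = edist a b :=
  le_antisymm (innerDiam_le_edist_of_segment_subset (subset_univ _)) (edist_le_innerDiam a b)

lemma exists_ne_innerDiam_lt_top (hΩ : IsOpen Ω) {x : ℂ} (hx : x ∈ Ω) :
    ∃ y ∈ Ω, y ≠ x ∧ innerDiam Ω x y < ⊤ := by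
  obtain ⟨r, hr, hball⟩ := Metric.isOpen_iff.1 hΩ x hx
  have hy : x + (r / 2 : ℝ) ∈ ball x r := by
    rw [mem_ball, dist_self_add_left, Complex.norm_real, Real.norm_of_nonneg (by positivity)]
    linarith
  refine ⟨_, hball hy, by simp [hr.ne'], ?_⟩
  exact (innerDiam_le_edist_of_mem_ball hball (mem_ball_self hr) hy).trans_lt (edist_lt_top _ _)

end innerDiam

section frontier

variable {U : Set ℂ} {x : ℂ}

lemma ball_infDist_frontier_subset (hU : IsOpen U) (hx : x ∈ U) :
    ball x (infDist x (frontier U)) ⊆ U := by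
  rcases eq_or_ne U univ with rfl | hne
  · exact subset_univ _
  obtain ⟨y, hy, hdy⟩ := exists_mem_frontier_infDist_compl_eq_dist hx hne
  refine (ball_subset_ball ?_).trans ball_infDist_compl_subset
  exact hdy ▸ infDist_le_dist_of_mem hy

lemma exists_seq_mem_ball_tendsto_frontier (hU : IsOpen U) (hx : x ∈ U)
    (hfr : (frontier U).Nonempty) :
    ∃ ζ ∈ frontier U, ∃ u : ℕ → ℂ,
      (∀ n, u n ∈ ball x (infDist x (frontier U))) ∧ Tendsto u atTop (𝓝 ζ) := by
  obtain ⟨ζ, hζ, hdist⟩ := isClosed_frontier.exists_infDist_eq_dist hfr x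
  have hpos : infDist x (frontier U) ≠ 0 := by
    rw [hdist, dist_ne_zero]
    rintro rfl
    exact disjoint_frontier_iff_isOpen.2 hU |>.notMem_of_mem_left hζ hx
  have hζ' : ζ ∈ closure (ball x (infDist x (frontier U))) := by
    rw [closure_ball x hpos, mem_closedBall, dist_comm, hdist]
  obtain ⟨u, hu, hlim⟩ := mem_closure_iff_seq_limit.1 hζ'
  exact ⟨ζ, hζ, u, hu, hlim⟩

end frontier

lemma exists_innerDiam_ge_of_closedBall_subset {Ω D : Set ℂ} {f : ℂ → ℂ} (hD : IsOpen D)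
    (hf : BijOn f Ω D) (hfc : ContinuousOn f Ω) (hfr : (frontier D).Nonempty) {x : ℂ}
    (hx : x ∈ Ω) {r : ℝ} (hball : closedBall x r ⊆ Ω) :
    ∃ w ∈ Ω, ENNReal.ofReal r ≤ innerDiam Ω x w ∧
      innerDiam D (f x) (f w) ≤ ENNReal.ofReal (infDist (f x) (frontier D)) := by
  obtain ⟨ζ, hζ, u, hu, hlim⟩ := exists_seq_mem_ball_tendsto_frontier hD (hf.mapsTo hx) hfr
  have hballD := ball_infDist_frontier_subset hD (hf.mapsTo hx)
  choose z hz hfz using fun n => hf.surjOn (hballD (hu n))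
  have hnear : ∀ n, innerDiam D (f x) (f (z n)) ≤ ENNReal.ofReal (infDist (f x) (frontier D)) :=
    fun n => hfz n ▸ (innerDiam_le_edist_of_mem_ball hballD
      (mem_ball_self (pos_of_mem_ball (hu n))) (hu n)).trans
        (edist_lt_ofReal.2 (mem_ball'.1 (hu n))).le
  by_contra! hfar
  have hzK : ∀ n, z n ∈ closedBall x r := fun n => by
    have hlt : innerDiam Ω x (z n) < ENNReal.ofReal r :=
      not_le.1 fun h => (hfar _ (hz n) h).not_ge (hnear n)
    rw [mem_closedBall']
    exact (edist_lt_ofReal.1 ((edist_le_innerDiam x (z n)).trans_lt hlt)).le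
  obtain ⟨a, ha, φ, hφ, hza⟩ := (isCompact_closedBall x r).tendsto_subseq hzK
  have hfa : Tendsto (u ∘ φ) atTop (𝓝 (f a)) := by
    have := ((hfc.mono hball) a ha).tendsto.comp
      (tendsto_nhdsWithin_iff.2 ⟨hza, Eventually.of_forall fun n => hzK (φ n)⟩)
    simpa only [Function.comp_def, hfz] using this
  have hζa : f a = ζ := tendsto_nhds_unique hfa (hlim.comp hφ.tendsto_atTop)
  exact disjoint_frontier_iff_isOpen.2 hD |>.notMem_of_mem_left hζ (hζa ▸ hf.mapsTo (hball ha))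

namespace IsInnerDiamQuasisymmetric

variable {η : ℝ → ℝ} {Ω D : Set ℂ} {f : ℂ → ℂ}

lemma ediam_image_comp_le (hqs : IsInnerDiamQuasisymmetric η Ω D f) {I : Set ℝ}
    (hI : Convex ℝ I) {γ : ℝ → ℂ} (hc : ContinuousOn γ I) (hm : MapsTo γ I Ω) {u : ℝ}
    (hu : u ∈ I) {w : ℂ} (hw : w ∈ Ω) {T : ℝ} (hT : 0 ≤ T)
    (h : ediam (γ '' I) ≤ ENNReal.ofReal T * innerDiam Ω (γ u) w) :
    ediam ((f ∘ γ) '' I) ≤ 2 * ENNReal.ofReal (η T) * innerDiam D (f (γ u)) (f w) := by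
  rw [mul_assoc]
  refine (ediam_mono ?_).trans (ediam_closedEBall_le (x := f (γ u)))
  rintro _ ⟨s, hs, rfl⟩
  rw [mem_closedEBall, edist_comm]
  exact (edist_le_innerDiam _ _).trans <| hqs _ (hm hu) _ (hm hs) _ hw T hT <|
    (innerDiam_le_ediam_image hI hc hm hu hs).trans h

lemma continuousOn (hqs : IsInnerDiamQuasisymmetric η Ω D f) (hΩ : IsOpen Ω) (hD : IsOpen D)
    (hf : BijOn f Ω D) (hη : Tendsto η (𝓝[≥] 0) (𝓝 0)) : ContinuousOn f Ω := by
  intro b hb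
  refine ContinuousAt.continuousWithinAt ?_
  obtain ⟨r, hr, hball⟩ := Metric.isOpen_iff.1 hΩ b hb
  obtain ⟨_, hy, hyb, hfin⟩ := exists_ne_innerDiam_lt_top hD (hf.mapsTo hb)
  obtain ⟨q, hq, rfl⟩ := hf.surjOn hy
  have hqb : 0 < dist b q := dist_pos.2 fun h => hyb (h ▸ rfl)
  have hbound : ∀ a ∈ ball b r, edist (f a) (f b) ≤
      ENNReal.ofReal (η (dist a b / dist b q)) * innerDiam D (f b) (f q) := by
    intro a ha
    rw [edist_comm]
    refine (edist_le_innerDiam _ _).trans <| hqs b hb a (hball ha) q hq _ (by positivity) ?_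
    calc innerDiam Ω b a ≤ edist b a := innerDiam_le_edist_of_mem_ball hball (mem_ball_self hr) ha
      _ = ENNReal.ofReal (dist a b / dist b q) * edist b q := by
        rw [edist_dist, edist_dist, ← ENNReal.ofReal_mul' dist_nonneg, div_mul_cancel₀ _ hqb.ne',
          dist_comm]
      _ ≤ _ := by gcongr; exact edist_le_innerDiam b q
  have hratio : Tendsto (fun a => dist a b / dist b q) (𝓝 b) (𝓝[≥] 0) := by
    refine tendsto_nhdsWithin_iff.2
      ⟨?_, Eventually.of_forall fun a => div_nonneg dist_nonneg dist_nonneg⟩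
    simpa using ((continuous_id.dist (continuous_const (y := b))).div_const (dist b q)).tendsto b
  have hlim := ENNReal.Tendsto.mul_const (ENNReal.tendsto_ofReal (hη.comp hratio)) (.inr hfin.ne)
  rw [ENNReal.ofReal_zero, zero_mul] at hlim
  rw [ContinuousAt, tendsto_iff_edist_tendsto_0]
  exact tendsto_of_tendsto_of_tendsto_of_le_of_le' tendsto_const_nhds hlim
    (Eventually.of_forall fun _ => zero_le) (eventually_of_mem (ball_mem_nhds b hr) hbound)

lemma tendsto_of_tendsto_innerDiam (hqs : IsInnerDiamQuasisymmetric η Ω D f) (hΩ : IsOpen Ω)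
    (hf : InjOn f Ω) {p : ℂ} (hp : p ∈ Ω) {ι : Type*} {l : Filter ι} {x : ι → ℂ}
    (hx : ∀ i, x i ∈ Ω) (h : Tendsto (fun i => innerDiam D (f p) (f (x i))) l (𝓝 0)) :
    Tendsto x l (𝓝 p) := by
  obtain ⟨q, hq, hqp, hfin⟩ := exists_ne_innerDiam_lt_top hΩ hp
  have hpos : 0 < innerDiam D (f p) (f q) :=
    (edist_pos.2 fun h => hqp (hf hq hp h.symm)).trans_le (edist_le_innerDiam _ _)
  have hρ : Tendsto (fun i => innerDiam Ω p (x i)) l (𝓝 0) := by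
    refine ENNReal.tendsto_nhds_zero.2 fun ε hε => ?_
    rcases eq_or_ne ε ⊤ with rfl | hε'
    · exact Eventually.of_forall fun _ => le_top
    set τ := (innerDiam Ω p q / ε).toReal
    have hτ : innerDiam Ω p q = ENNReal.ofReal τ * ε := by
      rw [ENNReal.ofReal_toReal (ENNReal.div_ne_top hfin.ne hε.ne'),
        ENNReal.div_mul_cancel hε.ne' hε']
    have hsmall := (ENNReal.Tendsto.const_mul h (.inr ENNReal.ofReal_ne_top)).eventually
      (gt_mem_nhds (a := innerDiam D (f p) (f q)) (b := ENNReal.ofReal (η τ) * 0)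
        (by rwa [mul_zero]))
    filter_upwards [hsmall] with i hi
    by_contra! hlt
    exact hi.not_ge <| hqs p hp q hq (x i) (hx i) τ ENNReal.toReal_nonneg <|
      hτ.trans_le (by gcongr)
  rw [tendsto_iff_edist_tendsto_0]
  exact tendsto_of_tendsto_of_tendsto_of_le_of_le tendsto_const_nhds hρ
    (fun _ => zero_le) fun i => edist_comm (x i) p ▸ edist_le_innerDiam _ _

/-- If `D` were all of `ℂ`, the images of points of `Ω` running to `∂Ω` inside a ball would stay
bounded, so a subsequence would converge to some `f p`; by quasisymmetry at `p` the points
themselves would then converge to `p ∈ Ω`. -/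
lemma frontier_nonempty (hqs : IsInnerDiamQuasisymmetric η Ω D f) (hΩ : IsOpen Ω)
    (hf : BijOn f Ω D) {x : ℂ} (hx : x ∈ Ω) (hfr : (frontier Ω).Nonempty) :
    (frontier D).Nonempty := by
  by_contra hD
  rw [not_nonempty_iff_eq_empty, frontier_eq_empty_iff] at hD
  obtain rfl : D = univ := hD.resolve_left (nonempty_of_mem (hf.mapsTo hx)).ne_empty
  obtain ⟨ζ, hζ, u, hu, hlim⟩ := exists_seq_mem_ball_tendsto_frontier hΩ hx hfr
  have huΩ : ∀ n, u n ∈ Ω := fun n => ball_infDist_frontier_subset hΩ hx (hu n)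
  obtain ⟨q, hq, hqx, -⟩ := exists_ne_innerDiam_lt_top hΩ hx
  set τ := infDist x (frontier Ω) / dist x q
  set M := ENNReal.ofReal (η τ) * edist (f x) (f q)
  have hbdd : ∀ n, f (u n) ∈ closedEBall (f x) M := by
    intro n
    have hτ : innerDiam Ω x (u n) ≤ ENNReal.ofReal τ * innerDiam Ω x q := calc
      innerDiam Ω x (u n)
        ≤ edist x (u n) :=
          innerDiam_le_edist_of_mem_ball (ball_infDist_frontier_subset hΩ hx)
            (mem_ball_self (pos_of_mem_ball (hu n))) (hu n)
      _ ≤ ENNReal.ofReal (infDist x (frontier Ω)) := (edist_lt_ofReal.2 (mem_ball'.1 (hu n))).le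
      _ = ENNReal.ofReal τ * edist x q := by
        rw [edist_dist, ← ENNReal.ofReal_mul' dist_nonneg,
          div_mul_cancel₀ _ (dist_ne_zero.2 hqx.symm)]
      _ ≤ ENNReal.ofReal τ * innerDiam Ω x q := by gcongr; exact edist_le_innerDiam x q
    have := hqs x hx (u n) (huΩ n) q hq τ (div_nonneg infDist_nonneg dist_nonneg) hτ
    rwa [innerDiam_univ, innerDiam_univ, edist_comm] at this
  have hM : Bornology.IsBounded (closedEBall (f x) M) := isBounded_iff_ediam_ne_top.2 <|
    ne_top_of_le_ne_top (ENNReal.mul_ne_top ENNReal.ofNat_ne_top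
      (ENNReal.mul_ne_top ENNReal.ofReal_ne_top (edist_ne_top _ _))) ediam_closedEBall_le
  obtain ⟨L, -, φ, hφ, hL⟩ := tendsto_subseq_of_bounded hM hbdd
  obtain ⟨p, hp, rfl⟩ := hf.surjOn (mem_univ L)
  have hup : Tendsto (u ∘ φ) atTop (𝓝 p) := by
    refine hqs.tendsto_of_tendsto_innerDiam hΩ hf.injOn hp (fun n => huΩ _) ?_
    simpa only [innerDiam_univ, edist_comm, Function.comp_def] using
      tendsto_iff_edist_tendsto_0.1 hL
  have hpζ : p = ζ := tendsto_nhds_unique hup (hlim.comp hφ.tendsto_atTop)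
  exact disjoint_frontier_iff_isOpen.2 hΩ |>.notMem_of_mem_left hζ (hpζ ▸ hp)

lemma exists_innerDiam_ge_half_infDist (hqs : IsInnerDiamQuasisymmetric η Ω D f)
    (hΩ : IsOpen Ω) (hD : IsOpen D) (hf : BijOn f Ω D) (hfc : ContinuousOn f Ω) {x : ℂ}
    (hx : x ∈ Ω) :
    ∃ w ∈ Ω, ENNReal.ofReal (infDist x (frontier Ω) / 2) ≤ innerDiam Ω x w ∧
      innerDiam D (f x) (f w) ≤ ENNReal.ofReal (infDist (f x) (frontier D)) := by
  rcases (infDist_nonneg (x := x) (s := frontier Ω)).eq_or_lt with h | h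
  · exact ⟨x, hx, by simp [← h], by simp [innerDiam_self (hf.mapsTo hx)]⟩
  have hfr : (frontier Ω).Nonempty :=
    nonempty_iff_ne_empty.2 fun he => by simp [he] at h
  exact exists_innerDiam_ge_of_closedBall_subset hD hf hfc (hqs.frontier_nonempty hΩ hf hx hfr)
    hx ((closedBall_subset_ball (half_lt_self h)).trans (ball_infDist_frontier_subset hΩ hx))

lemma ediam_image_comp_le_of_ediam_le_infDist (hqs : IsInnerDiamQuasisymmetric η Ω D f)
    (hΩ : IsOpen Ω) (hD : IsOpen D) (hf : BijOn f Ω D) (hfc : ContinuousOn f Ω) {I : Set ℝ}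
    (hI : Convex ℝ I) {γ : ℝ → ℂ} (hc : ContinuousOn γ I) (hm : MapsTo γ I Ω) {t : ℝ}
    (ht : t ∈ I) {A : ℝ} (hA : 0 ≤ A)
    (h : ediam (γ '' I) ≤ ENNReal.ofReal (A * infDist (γ t) (frontier Ω))) :
    ediam ((f ∘ γ) '' I) ≤
      2 * ENNReal.ofReal (η (2 * A)) * ENNReal.ofReal (infDist (f (γ t)) (frontier D)) := by
  obtain ⟨w, hw, hfar, hnear⟩ := hqs.exists_innerDiam_ge_half_infDist hΩ hD hf hfc (hm ht)
  refine (hqs.ediam_image_comp_le (T := 2 * A) hI hc hm ht hw (by positivity)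
    (h.trans ?_)).trans (by gcongr)
  rw [show A * _ = 2 * A * (infDist (γ t) (frontier Ω) / 2) by ring,
    ENNReal.ofReal_mul (by positivity)]
  gcongr

end IsInnerDiamQuasisymmetric

theorem statement_6 (Ω D : Set ℂ) (hΩo : IsOpen Ω)
    (hDo : IsOpen D)
    (η : ℝ → ℝ) (hη : StrictMonoOn η (Set.Ici 0)) (hη0 : η 0 = 0)
    (hηsurj : Set.SurjOn η (Set.Ici 0) (Set.Ici 0))
    (f : ℂ → ℂ) (hf : Set.BijOn f Ω D)
    (hqs : ∀ x₁ ∈ Ω, ∀ x₂ ∈ Ω, ∀ x₃ ∈ Ω, ∀ t : ℝ, 0 ≤ t →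
      innerDiam Ω x₁ x₂ ≤ ENNReal.ofReal t * innerDiam Ω x₁ x₃ →
      innerDiam D (f x₁) (f x₂) ≤ ENNReal.ofReal (η t) * innerDiam D (f x₁) (f x₃))
    (A : ℝ) (hA : 1 ≤ A) (γ : ℝ → ℂ) (hγ : IsInnerDiamUniformCurve A Ω γ) :
    IsInnerDiamUniformCurve (2 * η (2 * A)) D (f ∘ γ) := by
  replace hqs : IsInnerDiamQuasisymmetric η Ω D f := hqs
  obtain ⟨hγc, hγm, hdiam, hloc⟩ := hγ
  have hη' : Tendsto η (𝓝[≥] 0) (𝓝 0) := by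
    have := hη.continuousWithinAt_right_of_surjOn self_mem_nhdsWithin
      (by rw [hη0]; exact hηsurj.mono subset_rfl Ioi_subset_Ici_self)
    rwa [ContinuousWithinAt, hη0] at this
  have hfc := hqs.continuousOn hΩo hDo hf hη'
  have hconst : ENNReal.ofReal (2 * η (2 * A)) = 2 * ENNReal.ofReal (η (2 * A)) := by
    rw [ENNReal.ofReal_mul zero_le_two, ENNReal.ofReal_ofNat]
  refine ⟨hfc.comp hγc hγm, hf.mapsTo.comp hγm, ?_, fun t ht => ?_⟩
  · rw [hconst]
    exact hqs.ediam_image_comp_le (convex_Icc 0 1) hγc hγm (left_mem_Icc.2 zero_le_one)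
      (hγm (right_mem_Icc.2 zero_le_one)) (by linarith) (hdiam.trans (by gcongr; linarith))
  have hleft : Icc 0 t ⊆ Icc 0 1 := Icc_subset_Icc_right ht.2
  have hright : Icc t 1 ⊆ Icc 0 1 := Icc_subset_Icc_left ht.1
  rw [ENNReal.ofReal_mul' infDist_nonneg, hconst]
  rcases min_le_iff.1 (hloc t ht) with h | h
  · exact min_le_of_left_le <| hqs.ediam_image_comp_le_of_ediam_le_infDist hΩo hDo hf hfc
      (convex_Icc 0 t) (hγc.mono hleft) (hγm.mono_left hleft) ⟨ht.1, le_rfl⟩ (by linarith) h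
  · exact min_le_of_right_le <| hqs.ediam_image_comp_le_of_ediam_le_infDist hΩo hDo hf hfc
      (convex_Icc t 1) (hγc.mono hright) (hγm.mono_left hright) ⟨le_rfl, ht.2⟩ (by linarith) h
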